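/- arXiv:1705.00205 — 7 statements merged into one kernel-verified Lean document; each statement's English description precedes it below -/
import Mathlib

section
/- If p is a near ultrafilter on a G-flow X and A ⊆ X is a nonempty open set with A ∉ p, then there exists a symmetric open neighborhood V of the identity of G with VA ∉ p. -/
open Pointwise

/-! If every symmetric open thickening `V • A` belonged to `p`, then `p ∪ {A}` would still be a
near filter: given `U`, pick a symmetric open `W ∋ 1` with `W * W ⊆ U` and use `W • A ∈ p`,
because `W • (W • A) ⊆ U • A`. Maximality of `p` would then force `A ∈ p`. -/

/-- A near filter on the open sets of a `G`-flow `X`: a family of nonempty open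
subsets such that finite intersections of `U`-thickenings of its members are
nonempty, for every symmetric open neighborhood `U` of the identity. -/
def IsNearFilter (G : Type*) {X : Type*} [Group G] [TopologicalSpace G]
    [TopologicalSpace X] [MulAction G X] (F : Set (Set X)) : Prop :=
  (∀ A ∈ F, IsOpen A ∧ A.Nonempty) ∧
  ∀ s : Finset (Set X), s.Nonempty → ↑s ⊆ F →
    ∀ U : Set G, IsOpen U → (1 : G) ∈ U → U⁻¹ = U →
      (⋂ A ∈ s, U • A).Nonempty

/-- A near ultrafilter is a maximal near filter. -/
def IsNearUltrafilter (G : Type*) {X : Type*} [Group G] [TopologicalSpace G]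
    [TopologicalSpace X] [MulAction G X] (F : Set (Set X)) : Prop :=
  IsNearFilter G F ∧ ∀ F' : Set (Set X), IsNearFilter G F' → F ⊆ F' → F' ⊆ F

/-- The space `S_G(X)` of near ultrafilters on `X`. -/
def NearUltra (G X : Type*) [Group G] [TopologicalSpace G]
    [TopologicalSpace X] [MulAction G X] : Type _ :=
  {F : Set (Set X) // IsNearUltrafilter G F}

/-- The topology on `S_G(X)` generated by the sets `N_A = {p | A ∉ p}`
for `A` a nonempty open subset of `X`. -/
def nearTopology (G X : Type*) [Group G] [TopologicalSpace G]
    [TopologicalSpace X] [MulAction G X] : TopologicalSpace (NearUltra G X) :=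
  TopologicalSpace.generateFrom
    {N | ∃ A : Set X, IsOpen A ∧ A.Nonempty ∧ N = {p : NearUltra G X | A ∉ p.1}}

theorem exists_open_nhds_one_inv_eq_mul_subset {G : Type*} [Group G] [TopologicalSpace G]
    [IsTopologicalGroup G] {U : Set G} (hU : U ∈ nhds (1 : G)) :
    ∃ V : Set G, IsOpen V ∧ (1 : G) ∈ V ∧ V⁻¹ = V ∧ V * V ⊆ U := by
  obtain ⟨V, hVo, hV1, hVU⟩ := exists_open_nhds_one_mul_subset hU
  refine ⟨V ∩ V⁻¹, hVo.inter hVo.inv, ⟨hV1, by simpa using hV1⟩, by simp [Set.inter_comm], ?_⟩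
  exact (Set.mul_subset_mul Set.inter_subset_left Set.inter_subset_left).trans hVU

section NearFilter

variable {G X : Type*} [Group G] [TopologicalSpace G] [IsTopologicalGroup G] [TopologicalSpace X]
  [MulAction G X]

theorem IsNearFilter.insert_of_forall_smul_mem {F : Set (Set X)}
    (hF : IsNearFilter G F) {A : Set X} (hA : IsOpen A) (hAne : A.Nonempty)
    (hAF : ∀ V : Set G, IsOpen V → (1 : G) ∈ V → V⁻¹ = V → V • A ∈ F) :
    IsNearFilter G (insert A F) := by
  classical
  refine ⟨?_, fun s _ hsF U hU hU1 _ => ?_⟩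
  · rintro B (rfl | hB)
    exacts [⟨hA, hAne⟩, hF.1 B hB]
  obtain ⟨W, hWo, hW1, hWinv, hWU⟩ := exists_open_nhds_one_inv_eq_mul_subset (hU.mem_nhds hU1)
  have hWsubU : W ⊆ U := (Set.subset_mul_right W hW1).trans hWU
  have htF : ↑(insert (W • A) (s.erase A)) ⊆ F := by
    intro B hB
    simp only [Finset.coe_insert, Finset.coe_erase, Set.mem_insert_iff, Set.mem_sdiff,
      Finset.mem_coe, Set.mem_singleton_iff] at hB
    rcases hB with rfl | ⟨hBs, hBA⟩
    · exact hAF W hWo hW1 hWinv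
    · exact (hsF hBs).resolve_left hBA
  obtain ⟨x, hx⟩ := hF.2 _ (Finset.insert_nonempty _ _) htF W hWo hW1 hWinv
  simp only [Set.mem_iInter] at hx
  refine ⟨x, Set.mem_iInter₂.2 fun B hB => ?_⟩
  by_cases hBA : B = A
  · subst hBA
    have hWWB : W • W • B ⊆ U • B := by
      rw [← mul_smul]
      exact Set.smul_subset_smul_right hWU
    exact hWWB (hx _ (Finset.mem_insert_self _ _))
  · exact Set.smul_subset_smul_right hWsubU
      (hx B (Finset.mem_insert_of_mem (Finset.mem_erase.2 ⟨hBA, hB⟩)))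

theorem IsNearUltrafilter.mem_of_forall_smul_mem {F : Set (Set X)}
    (hF : IsNearUltrafilter G F) {A : Set X} (hA : IsOpen A) (hAne : A.Nonempty)
    (hAF : ∀ V : Set G, IsOpen V → (1 : G) ∈ V → V⁻¹ = V → V • A ∈ F) : A ∈ F :=
  hF.2 _ (hF.1.insert_of_forall_smul_mem hA hAne hAF) (Set.subset_insert A F) (Set.mem_insert A F)

end NearFilter

theorem exists_symm_nbhd_thickening_not_mem_general
    {G X : Type*} [Group G] [TopologicalSpace G] [IsTopologicalGroup G]
    [TopologicalSpace X] [MulAction G X]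
    (p : NearUltra G X) (A : Set X) (hA : IsOpen A) (hAne : A.Nonempty)
    (hAp : A ∉ p.1) :
    ∃ V : Set G, IsOpen V ∧ (1 : G) ∈ V ∧ V⁻¹ = V ∧ V • A ∉ p.1 := by
  by_contra! h
  exact hAp (p.2.mem_of_forall_smul_mem hA hAne h)

/-- If A is not in p then VA is not in p for some symmetric open identity nbhd V. -/
theorem exists_symm_nbhd_thickening_not_mem
    {G X : Type*} [Group G] [TopologicalSpace G] [IsTopologicalGroup G]
    [TopologicalSpace X] [CompactSpace X] [T2Space X]
    [MulAction G X] [ContinuousSMul G X]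
    (p : NearUltra G X) (A : Set X) (hA : IsOpen A) (hAne : A.Nonempty)
    (hAp : A ∉ p.1) :
    ∃ V : Set G, IsOpen V ∧ (1 : G) ∈ V ∧ V⁻¹ = V ∧ V • A ∉ p.1 :=
  exists_symm_nbhd_thickening_not_mem_general p A hA hAne hAp
end

section
/- Let p be a near ultrafilter on a G-flow X, let A ⊆ X be open with A ∈ p, and let B₁,...,B_k ⊆ A be open sets whose union is dense in A. Then B_i ∈ p for some i ≤ k. -/
open Pointwise

/-!
If no `B ∈ s` belongs to the near ultrafilter `p`, maximality of `p` yields for each `B` a symmetric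
open neighborhood `U_B` of the identity and finitely many members of `p` whose `U_B`-thickenings
have empty intersection with `U_B • B`. With `V = ⋂ U_B`, the near filter property gives a point
`x` in the `V`-thickenings of `A` and of all these members. Then `x ∈ V • A ⊆ closure (⋃ V • B)`,
so the open set of such points meets some `V • B`, contradicting the choice of `U_B`.
-/

section NearFilter

variable {G X : Type*} [Group G] [TopologicalSpace G] [TopologicalSpace X] [MulAction G X]

theorem IsNearFilter.insert {F : Set (Set X)} (hF : IsNearFilter G F) {B : Set X}
    (hB : IsOpen B) (hBne : B.Nonempty)
    (hmeet : ∀ t : Finset (Set X), ↑t ⊆ F → ∀ U : Set G, IsOpen U → (1 : G) ∈ U → U⁻¹ = U →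
      (U • B ∩ ⋂ C ∈ t, U • C).Nonempty) :
    IsNearFilter G (insert B F) := by
  classical
  refine ⟨?_, fun s _ hsF U hU hU1 hUinv => ?_⟩
  · rintro C (rfl | hC)
    exacts [⟨hB, hBne⟩, hF.1 C hC]
  · have htF : ↑(s.erase B) ⊆ F := fun C hC => by
      rw [Finset.coe_erase] at hC
      exact (hsF hC.1).resolve_left hC.2
    refine (hmeet _ htF U hU hU1 hUinv).mono fun x hx => Set.mem_iInter₂.2 fun C hC => ?_
    rw [← Finset.set_biInter_insert] at hx
    exact Set.mem_iInter₂.1 hx C (Finset.insert_erase_subset B s hC)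

theorem IsNearUltrafilter.exists_disjoint_of_notMem {F : Set (Set X)}
    (hF : IsNearUltrafilter G F) {B : Set X} (hB : IsOpen B) (hBF : B ∉ F) :
    ∃ t : Finset (Set X), ↑t ⊆ F ∧ ∃ U : Set G, (IsOpen U ∧ (1 : G) ∈ U ∧ U⁻¹ = U) ∧
      Disjoint (U • B) (⋂ C ∈ t, U • C) := by
  by_contra! hmeet
  simp only [Set.not_disjoint_iff_nonempty_inter] at hmeet
  have hBne : B.Nonempty :=
    (hmeet ∅ (by simp) Set.univ ⟨isOpen_univ, trivial, Set.inv_univ⟩).left.of_smul_right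
  exact hBF <| hF.2 _ (hF.1.insert hB hBne fun t ht U hU hU1 hUinv => hmeet t ht U ⟨hU, hU1, hUinv⟩)
    (Set.subset_insert B F) (Set.mem_insert B F)

end NearFilter

theorem Finset.exists_isOpen_inv_eq_subset_forall {G ι : Type*} [Group G] [TopologicalSpace G]
    (s : Finset ι) {U : ι → Set G} (hU : ∀ i ∈ s, IsOpen (U i) ∧ (1 : G) ∈ U i ∧ (U i)⁻¹ = U i) :
    ∃ V : Set G, (IsOpen V ∧ (1 : G) ∈ V ∧ V⁻¹ = V) ∧ ∀ i ∈ s, V ⊆ U i :=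
  ⟨⋂ i ∈ s, U i,
    ⟨isOpen_biInter_finset fun i hi => (hU i hi).1, Set.mem_iInter₂.2 fun i hi => (hU i hi).2.1,
      by simp only [Set.iInter_inv]; exact Set.iInter₂_congr fun i hi => (hU i hi).2.2⟩,
    fun _ hi => Set.biInter_subset_of_mem hi⟩

theorem mem_of_finite_dense_cover_general
    {G X : Type*} [Group G] [TopologicalSpace G]
    [TopologicalSpace X]
    [MulAction G X] [ContinuousSMul G X]
    (p : NearUltra G X) (A : Set X) (hAp : A ∈ p.1)
    (s : Finset (Set X)) (hopen : ∀ B ∈ s, IsOpen B)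
    (hdense : A ⊆ closure (⋃ B ∈ s, B)) :
    ∃ B ∈ s, B ∈ p.1 := by
  classical
  by_contra! hs
  choose! t ht U hU hdisj using fun B hB => p.2.exists_disjoint_of_notMem (hopen B hB) (hs B hB)
  obtain ⟨V, ⟨hV, hV1, hVinv⟩, hVU⟩ := s.exists_isOpen_inv_eq_subset_forall hU
  set T := insert A (s.biUnion t)
  have hTp : ↑T ⊆ p.1 := by
    simpa [T, Set.insert_subset_iff, hAp] using ht
  obtain ⟨x, hx⟩ := p.2.1.2 T (Finset.insert_nonempty _ _) hTp V hV hV1 hVinv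
  have hxV : x ∈ closure (⋃ B ∈ s, V • B) := by
    rw [← Set.smul_iUnion₂]
    exact set_smul_closure_subset V _ <|
      Set.smul_subset_smul_left hdense (Set.mem_iInter₂.1 hx A (Finset.mem_insert_self A _))
  have hTopen : IsOpen (⋂ C ∈ T, V • C) :=
    isOpen_biInter_finset fun C hC => (p.2.1.1 C (hTp hC)).1.smul_left
  obtain ⟨y, hyT, hyV⟩ := mem_closure_iff.1 hxV _ hTopen hx
  obtain ⟨B, hB, hyB⟩ := Set.mem_iUnion₂.1 hyV
  refine Set.disjoint_left.1 (hdisj B hB) (Set.smul_subset_smul_right (hVU B hB) hyB) ?_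
  exact Set.mem_iInter₂.2 fun C hC => Set.smul_subset_smul_right (hVU B hB) <|
    Set.mem_iInter₂.1 hyT C (Finset.mem_insert_of_mem (Finset.mem_biUnion.2 ⟨B, hB, hC⟩))

/-- If A is in p and finitely many open sets contained in A have dense union
in A, then one of them is in p. -/
theorem mem_of_finite_dense_cover
    {G X : Type*} [Group G] [TopologicalSpace G] [IsTopologicalGroup G]
    [TopologicalSpace X] [CompactSpace X] [T2Space X]
    [MulAction G X] [ContinuousSMul G X]
    (p : NearUltra G X) (A : Set X) (hA : IsOpen A) (hAp : A ∈ p.1)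
    (s : Finset (Set X)) (hopen : ∀ B ∈ s, IsOpen B) (hsub : ∀ B ∈ s, B ⊆ A)
    (hdense : A ⊆ closure (⋃ B ∈ s, B)) :
    ∃ B ∈ s, B ∈ p.1 :=
  mem_of_finite_dense_cover_general p A hAp s hopen hdense
end

section
/- The space S_G(X) of near ultrafilters on a G-flow X, topologized by declaring the sets N_A = {p : A ∉ p} (for A a nonempty open subset of X) to be a basis of open sets, is a Hausdorff topological space. -/
open Pointwise

/-! If `A ∈ p` and `A ∉ q`, maximality of `q` yields a neighbourhood `U` of `1` such that `U • A`
misses the `U`-thickening of finitely many members of `q`. For `V * V ⊆ U` the open set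
`W = V • A` then lies outside `q`, while its exterior `(closure W)ᶜ` lies outside `p` because `A`
is `V`-close to every member of `p`. Since `W ∪ (closure W)ᶜ` is dense, maximality forces every
near ultrafilter to contain `W` or its exterior, so `N_{(closure W)ᶜ}` and `N_W` are disjoint
neighbourhoods of `p` and `q`. -/

open Filter Topology

theorem dense_union_compl_closure {X : Type*} [TopologicalSpace X] (s : Set X) :
    Dense (s ∪ (closure s)ᶜ) := by
  intro x
  by_cases hx : x ∈ closure s
  · exact closure_mono Set.subset_union_left hx
  · exact subset_closure (Or.inr hx)

theorem subset_smul_of_one_mem {G X : Type*} [Monoid G] [MulAction G X] {U : Set G}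
    (hU : (1 : G) ∈ U) (A : Set X) : A ⊆ U • A :=
  fun a ha ↦ ⟨1, hU, a, ha, one_smul G a⟩

section

variable {G X : Type*} [Group G] [TopologicalSpace G] [TopologicalSpace X] [MulAction G X]
  {F : Set (Set X)}

theorem IsNearFilter.biInter_smul_nonempty [ContinuousInv G] [Nonempty X] (hF : IsNearFilter G F)
    {s : Finset (Set X)} (hsF : ↑s ⊆ F) {U : Set G} (hU : U ∈ 𝓝 (1 : G)) :
    (⋂ A ∈ s, U • A).Nonempty := by
  rcases s.eq_empty_or_nonempty with rfl | hs
  · simp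
  set V := interior U ∩ (interior U)⁻¹
  have hV : IsOpen V := isOpen_interior.inter isOpen_interior.inv
  have hV1 : (1 : G) ∈ V :=
    ⟨mem_interior_iff_mem_nhds.2 hU, by simpa using mem_interior_iff_mem_nhds.2 hU⟩
  have hVU : V ⊆ U := Set.inter_subset_left.trans interior_subset
  refine (hF.2 s hs hsF V hV hV1 (by simp [V, Set.inter_comm])).mono ?_
  exact Set.biInter_mono subset_rfl fun A _ ↦ Set.smul_subset_smul_right hVU

theorem IsNearFilter.smul_inter_nonempty [IsTopologicalGroup G] (hF : IsNearFilter G F)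
    {A B : Set X} (hA : A ∈ F) (hB : B ∈ F) {U : Set G} (hU : U ∈ 𝓝 (1 : G)) :
    (U • A ∩ B).Nonempty := by
  have : Nonempty X := ⟨(hF.1 A hA).2.some⟩
  obtain ⟨V, hV, hVU⟩ := exists_nhds_split_inv hU
  obtain ⟨x, hx⟩ := hF.biInter_smul_nonempty (s := {A, B})
    (by simp [Set.insert_subset_iff, hA, hB]) (inv_mem_nhds_one G hV)
  simp only [Finset.mem_insert, Finset.mem_singleton, Set.iInter_iInter_eq_or_left,
    Set.iInter_iInter_eq_left, Set.mem_inter_iff] at hx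
  obtain ⟨⟨v, hv, a, ha, rfl⟩, w, hw, b, hb, hwb⟩ := hx
  refine ⟨b, ⟨w⁻¹ / v⁻¹, hVU _ hw _ hv, a, ha, ?_⟩, hb⟩
  change (w⁻¹ / v⁻¹) • a = b
  change w • b = v • a at hwb
  rw [div_inv_eq_mul, mul_smul, ← hwb, inv_smul_smul]

theorem IsNearUltrafilter.mem_of_forall_smul_inter_nonempty (hF : IsNearUltrafilter G F)
    {W : Set X} (hWo : IsOpen W) (hWne : W.Nonempty)
    (h : ∀ t : Finset (Set X), ↑t ⊆ F → ∀ U ∈ 𝓝 (1 : G), (U • W ∩ ⋂ B ∈ t, U • B).Nonempty) :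
    W ∈ F := by
  classical
  refine hF.2 (insert W F) ⟨?_, ?_⟩ (Set.subset_insert _ _) (Set.mem_insert _ _)
  · rintro A (rfl | hA)
    exacts [⟨hWo, hWne⟩, hF.1.1 A hA]
  · intro s _ hs U hUo hU1 _
    have hsW : s ⊆ insert W (s.erase W) := Finset.insert_erase_subset W s
    have htF : ↑(s.erase W) ⊆ F := fun B hB ↦
      (hs (Finset.mem_of_mem_erase hB)).resolve_left (Finset.ne_of_mem_erase hB)
    refine (h _ htF U (hUo.mem_nhds hU1)).mono ?_
    rw [← Finset.set_biInter_insert]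
    exact Set.biInter_mono hsW fun _ _ ↦ subset_rfl

theorem IsNearUltrafilter.exists_smul_inter_eq_empty (hF : IsNearUltrafilter G F)
    {W : Set X} (hWo : IsOpen W) (hWF : W ∉ F) :
    ∃ t : Finset (Set X), ↑t ⊆ F ∧ ∃ U ∈ 𝓝 (1 : G), U • W ∩ ⋂ B ∈ t, U • B = ∅ := by
  rcases W.eq_empty_or_nonempty with rfl | hWne
  · exact ⟨∅, by simp, Set.univ, Filter.univ_mem, by simp⟩
  by_contra! h
  exact hWF (hF.mem_of_forall_smul_inter_nonempty hWo hWne h)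

theorem IsNearUltrafilter.mem_or_mem_of_dense_union [ContinuousInv G] [ContinuousConstSMul G X]
    [Nonempty X] (hF : IsNearUltrafilter G F) {W₁ W₂ : Set X} (h₁ : IsOpen W₁) (h₂ : IsOpen W₂)
    (hd : Dense (W₁ ∪ W₂)) : W₁ ∈ F ∨ W₂ ∈ F := by
  classical
  by_contra! hW
  obtain ⟨t₁, ht₁, U₁, hU₁, hE₁⟩ := hF.exists_smul_inter_eq_empty h₁ hW.1
  obtain ⟨t₂, ht₂, U₂, hU₂, hE₂⟩ := hF.exists_smul_inter_eq_empty h₂ hW.2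
  have ht : ↑(t₁ ∪ t₂) ⊆ F := by simpa using Set.union_subset ht₁ ht₂
  have hO : IsOpen (⋂ B ∈ t₁ ∪ t₂, (U₁ ∩ U₂) • B) :=
    isOpen_biInter_finset fun B hB ↦ (hF.1.1 B (ht hB)).1.smul_left
  obtain ⟨x, hxO, hxW⟩ :=
    hd.inter_open_nonempty _ hO (hF.1.biInter_smul_nonempty ht (inter_mem hU₁ hU₂))
  have hx : ∀ {t U}, t ⊆ t₁ ∪ t₂ → U₁ ∩ U₂ ⊆ U → x ∈ ⋂ B ∈ t, U • B := fun ht hU ↦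
    Set.biInter_mono (fun _ hB ↦ ht hB) (fun _ _ ↦ Set.smul_subset_smul_right hU) hxO
  rcases hxW with hx₁ | hx₂
  · exact hE₁.subset ⟨subset_smul_of_one_mem (mem_of_mem_nhds hU₁) W₁ hx₁,
      hx Finset.subset_union_left Set.inter_subset_left⟩
  · exact hE₂.subset ⟨subset_smul_of_one_mem (mem_of_mem_nhds hU₂) W₂ hx₂,
      hx Finset.subset_union_right Set.inter_subset_right⟩

theorem IsNearUltrafilter.exists_separating_open_sets [IsTopologicalGroup G]
    [ContinuousConstSMul G X] {p q : Set (Set X)} (hp : IsNearFilter G p)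
    (hq : IsNearUltrafilter G q) {A : Set X} (hAp : A ∈ p) (hAq : A ∉ q) :
    ∃ W₁ W₂ : Set X, IsOpen W₁ ∧ W₁.Nonempty ∧ IsOpen W₂ ∧ W₂.Nonempty ∧ W₁ ∉ p ∧ W₂ ∉ q ∧
      ∀ r, IsNearUltrafilter G r → W₁ ∈ r ∨ W₂ ∈ r := by
  classical
  obtain ⟨hAo, hAne⟩ := hp.1 A hAp
  have : Nonempty X := ⟨hAne.some⟩
  obtain ⟨t, htq, U, hU, hE⟩ := hq.exists_smul_inter_eq_empty hAo hAq
  obtain ⟨V, hVo, hV1, hVU⟩ := exists_open_nhds_one_mul_subset hU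
  have hW₂o : IsOpen (V • A) := hAo.smul_left
  have hW₂q : V • A ∉ q := by
    intro hW₂
    obtain ⟨x, hx⟩ := hq.1.biInter_smul_nonempty (s := insert (V • A) t)
      (by simpa [Set.insert_subset_iff] using ⟨hW₂, htq⟩) (hVo.mem_nhds hV1)
    rw [Finset.set_biInter_insert, ← mul_smul] at hx
    refine hE.subset ⟨Set.smul_subset_smul_right hVU hx.1, ?_⟩
    exact Set.biInter_mono subset_rfl
      (fun _ _ ↦ Set.smul_subset_smul_right ((Set.subset_mul_left V hV1).trans hVU)) hx.2
  have hW₁p : (closure (V • A))ᶜ ∉ p := fun hW₁ ↦ by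
    obtain ⟨x, hx, hx'⟩ := hp.smul_inter_nonempty hAp hW₁ (hVo.mem_nhds hV1)
    exact hx' (subset_closure hx)
  have hdich : ∀ r, IsNearUltrafilter G r → V • A ∈ r ∨ (closure (V • A))ᶜ ∈ r := fun r hr ↦
    hr.mem_or_mem_of_dense_union hW₂o isClosed_closure.isOpen_compl
      (dense_union_compl_closure _)
  refine ⟨_, _, isClosed_closure.isOpen_compl, (hq.1.1 _ ((hdich q hq).resolve_left hW₂q)).2,
    hW₂o, hAne.mono (subset_smul_of_one_mem hV1 A), hW₁p, hW₂q, fun r hr ↦ (hdich r hr).symm⟩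

end

theorem NearUltra.isOpen_setOf_notMem {G X : Type*} [Group G] [TopologicalSpace G]
    [TopologicalSpace X] [MulAction G X] {A : Set X} (hAo : IsOpen A) (hAne : A.Nonempty) :
    IsOpen[nearTopology G X] {p : NearUltra G X | A ∉ p.1} :=
  TopologicalSpace.isOpen_generateFrom_of_mem ⟨A, hAo, hAne, rfl⟩

theorem NearUltra.separatedNhds_of_mem_of_notMem {G X : Type*} [Group G] [TopologicalSpace G]
    [IsTopologicalGroup G] [TopologicalSpace X] [MulAction G X] [ContinuousConstSMul G X]
    {p q : NearUltra G X} {A : Set X} (hAp : A ∈ p.1) (hAq : A ∉ q.1) :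
    @SeparatedNhds _ (nearTopology G X) {p} {q} := by
  obtain ⟨W₁, W₂, hW₁o, hW₁ne, hW₂o, hW₂ne, hW₁p, hW₂q, hdich⟩ :=
    q.2.exists_separating_open_sets p.2.1 hAp hAq
  refine ⟨_, _, isOpen_setOf_notMem hW₁o hW₁ne, isOpen_setOf_notMem hW₂o hW₂ne,
    Set.singleton_subset_iff.2 hW₁p, Set.singleton_subset_iff.2 hW₂q, ?_⟩
  exact Set.disjoint_left.2 fun r hr₁ hr₂ ↦ (hdich r.1 r.2).elim hr₁ hr₂

theorem nearUltra_t2_general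
    {G X : Type*} [Group G] [TopologicalSpace G] [IsTopologicalGroup G]
    [TopologicalSpace X]
    [MulAction G X] [ContinuousSMul G X] :
    @T2Space (NearUltra G X) (nearTopology G X) := by
  let := nearTopology G X
  refine ⟨fun p q hpq ↦ ?_⟩
  obtain ⟨A, hA⟩ : ∃ A, A ∈ p.1 ∧ A ∉ q.1 ∨ A ∈ q.1 ∧ A ∉ p.1 := by
    by_contra! h
    exact hpq (Subtype.ext (Set.ext fun A ↦ ⟨(h A).1, (h A).2⟩))
  have hsep : SeparatedNhds {p} {q} := by
    rcases hA with ⟨hAp, hAq⟩ | ⟨hAq, hAp⟩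
    · exact NearUltra.separatedNhds_of_mem_of_notMem hAp hAq
    · exact (NearUltra.separatedNhds_of_mem_of_notMem hAq hAp).symm
  obtain ⟨u, v, hu, hv, hpu, hqv, huv⟩ := hsep
  exact ⟨u, v, hu, hv, hpu rfl, hqv rfl, huv⟩

/-- The space of near ultrafilters is Hausdorff. -/
theorem nearUltra_t2
    {G X : Type*} [Group G] [TopologicalSpace G] [IsTopologicalGroup G]
    [TopologicalSpace X] [CompactSpace X] [T2Space X]
    [MulAction G X] [ContinuousSMul G X] :
    @T2Space (NearUltra G X) (nearTopology G X) :=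
  nearUltra_t2_general
end

section
/- Suppose there exist nonempty open sets {A_n : n < ω} in X and a symmetric open neighborhood V of the identity of G such that the sets VA_n are pairwise disjoint. Then S_G(X) is not metrizable. (In particular, there is a closed subspace of S_G(X) admitting a continuous surjection onto βω.) -/
open Pointwise

/-!
`S_G(X)` is compact by Alexander's subbasis theorem: a family of sets `N_A` with no finite
subcover is indexed by a near filter, and a near ultrafilter extending it lies in no `N_A`.
A metrizable `S_G(X)` would therefore be sequentially compact. Pick near ultrafilters
`q n ∋ A n` and a convergent subsequence `q (φ k) → r`. Since `{p | B ∈ p}` is closed, `r`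
contains `⋃ n ∈ T, A n` whenever `φ k ∈ T` infinitely often; for `T` the even-indexed values
of `φ` and for its complement this gives two members of `r` with disjoint `V`-thickenings.
-/

open Filter Topology

attribute [local instance] nearTopology

section

variable {G X : Type*} [Group G] [TopologicalSpace G] [TopologicalSpace X] [MulAction G X]
  {F : Set (Set X)}

theorem IsNearFilter.of_forall_finset (hF : ∀ A ∈ F, IsOpen A ∧ A.Nonempty)
    (h : ∀ s : Finset (Set X), s.Nonempty → ↑s ⊆ F →
      ∃ F' : Set (Set X), IsNearFilter G F' ∧ ↑s ⊆ F') :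
    IsNearFilter G F := by
  refine ⟨hF, fun s hs hsF U hU hU1 hUsymm => ?_⟩
  obtain ⟨F', hF', hsF'⟩ := h s hs hsF
  exact hF'.2 s hs hsF' U hU hU1 hUsymm

theorem IsNearFilter.singleton {A : Set X} (hA : IsOpen A) (hne : A.Nonempty) :
    IsNearFilter G ({A} : Set (Set X)) := by
  refine ⟨by simpa using And.intro hA hne, fun s _ hs U _ hU1 _ => hne.mono ?_⟩
  refine fun x hx => Set.mem_iInter₂.2 fun B hB => ?_
  rw [hs hB]
  simpa using Set.smul_mem_smul hU1 hx

theorem IsNearFilter.of_forall_exists_subset {F' : Set (Set X)} (hF : IsNearFilter G F)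
    (hopen : ∀ B ∈ F', IsOpen B) (h : ∀ B ∈ F', ∃ A ∈ F, A ⊆ B) : IsNearFilter G F' := by
  classical
  choose! f hfF hfsub using h
  refine ⟨fun B hB => ⟨hopen B hB, (hF.1 _ (hfF B hB)).2.mono (hfsub B hB)⟩,
    fun s hs hsF' U hU hU1 hUsymm => ?_⟩
  obtain ⟨x, hx⟩ := hF.2 (s.image f) (hs.image f) (by
    rw [Finset.coe_image, Set.image_subset_iff]; exact fun B hB => hfF B (hsF' hB))
    U hU hU1 hUsymm
  refine ⟨x, Set.mem_iInter₂.2 fun B hB => ?_⟩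
  exact Set.smul_subset_smul_left (hfsub B (hsF' hB))
    (Set.mem_iInter₂.1 hx (f B) (Finset.mem_image_of_mem f hB))

theorem IsNearFilter.not_disjoint_smul (hF : IsNearFilter G F) {B C : Set X} (hB : B ∈ F)
    (hC : C ∈ F) {V : Set G} (hV : IsOpen V) (hV1 : (1 : G) ∈ V) (hVsymm : V⁻¹ = V) :
    ¬ Disjoint (V • B) (V • C) := by
  classical
  rw [Set.not_disjoint_iff_nonempty_inter]
  simpa using hF.2 {B, C} (Finset.insert_nonempty _ _) (by simp [Set.insert_subset_iff, hB, hC])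
    V hV hV1 hVsymm

theorem IsNearFilter.exists_isNearUltrafilter_superset (hF : IsNearFilter G F) :
    ∃ p, IsNearUltrafilter G p ∧ F ⊆ p := by
  have hchains : ∀ c ⊆ {F' : Set (Set X) | IsNearFilter G F'}, IsChain (· ⊆ ·) c →
      c.Nonempty → ∃ ub ∈ {F' : Set (Set X) | IsNearFilter G F'}, ∀ F' ∈ c, F' ⊆ ub := by
    refine fun c hc hchain hne => ⟨⋃₀ c, ?_, fun _ => Set.subset_sUnion_of_mem⟩
    refine IsNearFilter.of_forall_finset (fun A ⟨F', hF', hA⟩ => (hc hF').1 A hA)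
      fun s _ hs => ?_
    obtain ⟨F', hF', hsF'⟩ :=
      DirectedOn.exists_mem_subset_of_finite_of_subset_sUnion hne hchain.directedOn
        s.finite_toSet hs
    exact ⟨F', hc hF', hsF'⟩
  obtain ⟨p, hFp, hp⟩ := zorn_subset_nonempty _ hchains F hF
  exact ⟨p, ⟨hp.1, fun F' hF' hpF' => hp.2 hF' hpF'⟩, hFp⟩

theorem IsNearUltrafilter.mem_of_superset {p : Set (Set X)} (hp : IsNearUltrafilter G p)
    {A B : Set X} (hA : A ∈ p) (hB : IsOpen B) (hAB : A ⊆ B) : B ∈ p := by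
  refine hp.2 (insert B p) ?_ (Set.subset_insert _ _) (Set.mem_insert _ _)
  refine hp.1.of_forall_exists_subset ?_ ?_
  · rintro C (rfl | hC)
    exacts [hB, (hp.1.1 C hC).1]
  · rintro C (rfl | hC)
    exacts [⟨A, hA, hAB⟩, ⟨C, hC, subset_rfl⟩]

theorem NearUltra.isClosed_setOf_mem {A : Set X} (hA : IsOpen A) :
    IsClosed {p : NearUltra G X | A ∈ p.1} := by
  rcases A.eq_empty_or_nonempty with rfl | hne
  · convert isClosed_empty
    exact Set.eq_empty_of_forall_notMem fun p hp => Set.not_nonempty_empty (p.2.1.1 ∅ hp).2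
  · rw [← isOpen_compl_iff]
    exact TopologicalSpace.GenerateOpen.basic _ ⟨A, hA, hne, rfl⟩

theorem NearUltra.compactSpace : CompactSpace (NearUltra G X) := by
  refine compactSpace_generateFrom rfl fun P hP hcover => ?_
  by_contra! hfin
  set F : Set (Set X) := {A | IsOpen A ∧ A.Nonempty ∧ {p : NearUltra G X | A ∉ p.1} ∈ P}
  have hF : IsNearFilter G F := by
    refine IsNearFilter.of_forall_finset (fun A hA => ⟨hA.1, hA.2.1⟩) fun s _ hs => ?_
    have hsP : (fun A => {p : NearUltra G X | A ∉ p.1}) '' s ⊆ P :=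
      Set.image_subset_iff.2 fun A hA => (hs hA).2.2
    obtain ⟨p, hp⟩ := Set.nonempty_compl.2 (hfin _ hsP (s.finite_toSet.image _))
    have hsp : ∀ A ∈ s, A ∈ p.1 := by simpa using hp
    exact ⟨p.1, p.2.1, hsp⟩
  obtain ⟨p, hp, hFp⟩ := hF.exists_isNearUltrafilter_superset
  obtain ⟨N, hNP, hpN⟩ := Set.mem_sUnion.1 (hcover ▸ Set.mem_univ (⟨p, hp⟩ : NearUltra G X))
  obtain ⟨A, hA, hne, rfl⟩ := hP hNP
  exact hpN (hFp ⟨hA, hne, hNP⟩)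

theorem Set.disjoint_smul_biUnion {ι α β : Type*} [SMul α β] {V : Set α} {A : ι → Set β}
    (hA : Pairwise fun i j => Disjoint (V • A i) (V • A j)) {S T : Set ι}
    (hST : Disjoint S T) :
    Disjoint (V • ⋃ i ∈ S, A i) (V • ⋃ i ∈ T, A i) := by
  simp only [Set.smul_iUnion₂, Set.disjoint_iUnion₂_left, Set.disjoint_iUnion₂_right]
  exact fun i hi j hj => hA (hST.ne_of_mem hj hi)

end

theorem nearUltra_not_metrizable_general
    {G X : Type*} [Group G] [TopologicalSpace G] [TopologicalSpace X] [MulAction G X]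
    (A : ℕ → Set X) (hA : ∀ n, IsOpen (A n) ∧ (A n).Nonempty)
    (V : Set G) (hV : IsOpen V) (hV1 : (1 : G) ∈ V) (hVsymm : V⁻¹ = V)
    (hdisj : ∀ m n : ℕ, m ≠ n → Disjoint (V • A m) (V • A n)) :
    ¬ @TopologicalSpace.MetrizableSpace (NearUltra G X) (nearTopology G X) := by
  intro _
  have := NearUltra.compactSpace (G := G) (X := X)
  choose q hq hAq using fun n =>
    (IsNearFilter.singleton (G := G) (hA n).1 (hA n).2).exists_isNearUltrafilter_superset
  obtain ⟨r, φ, hφ, hlim⟩ :=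
    CompactSpace.tendsto_subseq (X := NearUltra G X) fun n => ⟨q n, hq n⟩
  have hopen (T : Set ℕ) : IsOpen (⋃ n ∈ T, A n) := isOpen_biUnion fun n _ => (hA n).1
  have hmem : ∀ T : Set ℕ, (∃ᶠ k in atTop, φ k ∈ T) → (⋃ n ∈ T, A n) ∈ r.1 := fun T hT =>
    (NearUltra.isClosed_setOf_mem (hopen T)).mem_of_frequently_of_tendsto
      (hT.mono fun k hk => (hq (φ k)).mem_of_superset (hAq (φ k) rfl) (hopen T)
        (Set.subset_biUnion_of_mem hk)) hlim
  set S := Set.range fun k => φ (2 * k)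
  have hS : ∃ᶠ k in atTop, φ k ∈ S := frequently_atTop.2 fun a => ⟨2 * a, by omega, a, rfl⟩
  have hSc : ∃ᶠ k in atTop, φ k ∈ Sᶜ := frequently_atTop.2 fun a =>
    ⟨2 * a + 1, by omega, fun ⟨k, hk⟩ => by have := hφ.injective hk; omega⟩
  exact r.2.1.not_disjoint_smul (hmem S hS) (hmem Sᶜ hSc) hV hV1 hVsymm
    (Set.disjoint_smul_biUnion (fun m n hmn => hdisj m n hmn) disjoint_compl_right)

/-- If there are countably many nonempty open sets whose V-thickenings are
pairwise disjoint for some symmetric open identity neighborhood V, then the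
space of near ultrafilters is not metrizable. -/
theorem nearUltra_not_metrizable
    {G X : Type*} [Group G] [TopologicalSpace G] [IsTopologicalGroup G]
    [TopologicalSpace X] [CompactSpace X] [T2Space X]
    [MulAction G X] [ContinuousSMul G X]
    (A : ℕ → Set X) (hA : ∀ n, IsOpen (A n) ∧ (A n).Nonempty)
    (V : Set G) (hV : IsOpen V) (hV1 : (1 : G) ∈ V) (hVsymm : V⁻¹ = V)
    (hdisj : ∀ m n : ℕ, m ≠ n → Disjoint (V • A m) (V • A n)) :
    ¬ @TopologicalSpace.MetrizableSpace (NearUltra G X) (nearTopology G X) :=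
  nearUltra_not_metrizable_general A hA V hV hV1 hVsymm hdisj
end

section
/- Let G be a Polish group acting continuously on a compact metric space X, and suppose there is an open neighborhood U of the identity and a nonempty open B ⊆ X such that for every nonempty open C ⊆ B there is a nonempty open D ⊆ C with C \ UD having nonempty interior. Then there exist nonempty open sets {A_n : n < ω} in X and a symmetric open neighborhood V of the identity such that the sets VA_n are pairwise disjoint. -/
/-!
Starting from `C₀ = B`, repeatedly apply the hypothesis: choose a nonempty open `Aₙ ⊆ Cₙ` with
`Cₙ₊₁ = interior (Cₙ \ U • Aₙ)` nonempty. For `m < n` the set `Aₙ ⊆ Cₘ₊₁` misses `U • Aₘ`; taking a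
symmetric open `V` with `V * V ⊆ U`, a common point `g • a = k • b` of `V • Aₘ` and `V • Aₙ` would
put `b = (k⁻¹ * g) • a` in `U • Aₘ`.
-/

open Pointwise Topology

theorem exists_isOpen_nhds_one_inv_eq_mul_subset {G : Type*} [Group G] [TopologicalSpace G]
    [IsTopologicalGroup G] {U : Set G} (hU : U ∈ 𝓝 (1 : G)) :
    ∃ V : Set G, IsOpen V ∧ (1 : G) ∈ V ∧ V⁻¹ = V ∧ V * V ⊆ U := by
  obtain ⟨W, hWo, hW1, hWU⟩ := exists_open_nhds_one_mul_subset hU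
  refine ⟨W ∩ W⁻¹, hWo.inter hWo.inv, ⟨hW1, by simpa using hW1⟩, by simp [Set.inter_comm], ?_⟩
  exact (Set.mul_subset_mul Set.inter_subset_left Set.inter_subset_left).trans hWU

theorem Disjoint.smul_smul_of_inv_mul_subset {G X : Type*} [Group G] [MulAction G X]
    {U V : Set G} {A B : Set X} (hVU : V⁻¹ * V ⊆ U) (h : Disjoint (U • A) B) :
    Disjoint (V • A) (V • B) := by
  rw [Set.disjoint_left]
  rintro _ ⟨g, hg, a, ha, rfl⟩ ⟨k, hk, b, hb, hkb⟩
  refine Set.disjoint_left.mp h ⟨k⁻¹ * g, hVU (Set.mul_mem_mul (Set.inv_mem_inv.mpr hk) hg), a, ha,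
    ?_⟩ hb
  change k • b = g • a at hkb
  change (k⁻¹ * g) • a = b
  rw [mul_smul, ← hkb, inv_smul_smul]

theorem exists_seq_subset_diff_smul {G X : Type*} [SMul G X] [TopologicalSpace X] {U : Set G}
    {B : Set X} (hB : IsOpen B) (hBne : B.Nonempty)
    (h : ∀ C : Set X, IsOpen C → C.Nonempty → C ⊆ B →
      ∃ D : Set X, IsOpen D ∧ D.Nonempty ∧ D ⊆ C ∧ (interior (C \ U • D)).Nonempty) :
    ∃ A C : ℕ → Set X, (∀ n, IsOpen (A n) ∧ (A n).Nonempty) ∧ (∀ n, A n ⊆ C n) ∧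
      ∀ n, C (n + 1) ⊆ C n \ U • A n := by
  choose D hDo hDne hDsub hDint using h
  let T := {C : Set X // IsOpen C ∧ C.Nonempty ∧ C ⊆ B}
  let next : T → T := fun C =>
    ⟨interior (C.1 \ U • D C.1 C.2.1 C.2.2.1 C.2.2.2), isOpen_interior, hDint ..,
      fun _ hx => C.2.2.2 (interior_subset hx).1⟩
  let C : ℕ → T := fun n => next^[n] ⟨B, hB, hBne, subset_rfl⟩
  refine ⟨fun n => D (C n).1 (C n).2.1 (C n).2.2.1 (C n).2.2.2, fun n => (C n).1,
    fun n => ⟨hDo .., hDne ..⟩, fun n => hDsub .., fun n => ?_⟩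
  simp only [C, Function.iterate_succ_apply']
  exact interior_subset

theorem disjoint_smul_of_subset_diff_smul {G X : Type*} [SMul G X] {U : Set G} {A C : ℕ → Set X}
    (hAC : ∀ n, A n ⊆ C n) (hC : ∀ n, C (n + 1) ⊆ C n \ U • A n) {m n : ℕ} (hmn : m < n) :
    Disjoint (U • A m) (A n) := by
  have hanti : Antitone C := antitone_nat_of_succ_le fun n => (hC n).trans Set.sdiff_subset
  exact Set.disjoint_right.mpr fun _ hx => (hC m (hanti hmn (hAC n hx))).2

theorem exists_disjoint_thickenings_general
    {G X : Type*} [Group G] [TopologicalSpace G] [IsTopologicalGroup G]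
    [MetricSpace X]
    [MulAction G X]
    (U : Set G) (hU : IsOpen U) (hU1 : (1 : G) ∈ U)
    (B : Set X) (hB : IsOpen B) (hBne : B.Nonempty)
    (h : ∀ C : Set X, IsOpen C → C.Nonempty → C ⊆ B →
      ∃ D : Set X, IsOpen D ∧ D.Nonempty ∧ D ⊆ C ∧
        (interior (C \ U • D)).Nonempty) :
    ∃ A : ℕ → Set X, (∀ n, IsOpen (A n) ∧ (A n).Nonempty) ∧
      ∃ V : Set G, IsOpen V ∧ (1 : G) ∈ V ∧ V⁻¹ = V ∧
        ∀ m n : ℕ, m ≠ n → Disjoint (V • A m) (V • A n) := by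
  obtain ⟨A, C, hA, hAC, hC⟩ := exists_seq_subset_diff_smul hB hBne h
  obtain ⟨V, hVo, hV1, hVsymm, hVU⟩ := exists_isOpen_nhds_one_inv_eq_mul_subset (hU.mem_nhds hU1)
  refine ⟨A, hA, V, hVo, hV1, hVsymm, (pairwise_disjoint_on fun n => V • A n).mpr ?_⟩
  intro m n hmn
  have hVU' : V⁻¹ * V ⊆ U := by rwa [hVsymm]
  exact (disjoint_smul_of_subset_diff_smul hAC hC hmn).smul_smul_of_inv_mul_subset hVU'

/-- From the failure of Rosendal's criterion one extracts countably many
nonempty open sets with pairwise disjoint V-thickenings. -/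
theorem exists_disjoint_thickenings
    {G X : Type*} [Group G] [TopologicalSpace G] [IsTopologicalGroup G]
    [PolishSpace G]
    [MetricSpace X] [CompactSpace X]
    [MulAction G X] [ContinuousSMul G X]
    (U : Set G) (hU : IsOpen U) (hU1 : (1 : G) ∈ U)
    (B : Set X) (hB : IsOpen B) (hBne : B.Nonempty)
    (h : ∀ C : Set X, IsOpen C → C.Nonempty → C ⊆ B →
      ∃ D : Set X, IsOpen D ∧ D.Nonempty ∧ D ⊆ C ∧
        (interior (C \ U • D)).Nonempty) :
    ∃ A : ℕ → Set X, (∀ n, IsOpen (A n) ∧ (A n).Nonempty) ∧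
      ∃ V : Set G, IsOpen V ∧ (1 : G) ∈ V ∧ V⁻¹ = V ∧
        ∀ m n : ℕ, m ≠ n → Disjoint (V • A m) (V • A n) :=
  exists_disjoint_thickenings_general U hU hU1 B hB hBne h
end

section
/- If M(G) is metrizable and has a comeager orbit, then for every minimal G-flow X, X has a comeager orbit. (Comeager orbits push forward: if π: X → Y is a surjective G-map of minimal flows and x ∈ X has comeager orbit, then π(x) has comeager orbit in Y.) -/
/-!
Let `π : M → X` be the factor map and `m` a point with comeager orbit. Since `M` is minimal,
finitely many translates of any nonempty open set cover `M`, so by Baire's theorem `π` maps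
closed sets with nonempty interior to sets with nonempty interior. Write the complement of
the orbit of `m` as a countable union of closed nowhere dense sets `F`. If `x` is not in the
orbit of `π m`, its fiber misses the orbit of `m`, so by Baire's theorem in the compact fiber
some basic open `v` meets the fiber only inside some `F`. For fixed `F` and `v` these points `x`
form a nowhere dense set: near any of them one finds an open piece of `M` inside `v \ F` lying
over points close to `x`, and the interior of its image consists of points whose fiber meets
`v` outside `F`. Hence the complement of the orbit of `π m` is meagre.
-/

open Pointwise

open Set Topology TopologicalSpace

lemma isNowhereDense_of_forall_exists_isOpen_disjoint {X : Type*} [TopologicalSpace X]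
    {s : Set X}
    (h : ∀ W, IsOpen W → (W ∩ s).Nonempty → ∃ Q ⊆ W, IsOpen Q ∧ Q.Nonempty ∧ Disjoint Q s) :
    IsNowhereDense s := by
  by_contra hs
  have hWs : (interior (closure s) ∩ s).Nonempty := by
    rw [inter_comm, ← closure_inter_open_nonempty_iff isOpen_interior,
      inter_eq_self_of_subset_right interior_subset]
    exact nonempty_iff_ne_empty.mpr hs
  obtain ⟨Q, hQW, hQo, hQne, hQs⟩ := h _ isOpen_interior hWs
  obtain ⟨z, hzs, hzQ⟩ := (closure_inter_open_nonempty_iff hQo).mp <| by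
    rwa [inter_eq_self_of_subset_right (hQW.trans interior_subset)]
  exact disjoint_left.mp hQs hzQ hzs

lemma IsCompact.exists_inter_subset_of_subset_sUnion {M : Type*} [TopologicalSpace M]
    [T2Space M] {K : Set M} (hK : IsCompact K) (hne : K.Nonempty) {S : Set (Set M)}
    (hSc : S.Countable) (hScl : ∀ F ∈ S, IsClosed F) (hKS : K ⊆ ⋃₀ S)
    {B : Set (Set M)} (hB : IsTopologicalBasis B) :
    ∃ F ∈ S, ∃ v ∈ B, (K ∩ v).Nonempty ∧ K ∩ v ⊆ F := by
  have : CompactSpace K := isCompact_iff_compactSpace.mp hK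
  have : Nonempty K := hne.to_subtype
  have : Countable S := hSc.to_subtype
  have hcov : ⋃ F : S, ((↑) : K → M) ⁻¹' F = univ := by
    refine eq_univ_of_forall fun y ↦ ?_
    obtain ⟨F, hFS, hyF⟩ := hKS y.2
    exact mem_iUnion.mpr ⟨⟨F, hFS⟩, hyF⟩
  obtain ⟨⟨F, hFS⟩, y, hy⟩ := nonempty_interior_of_iUnion_of_closed
    (fun F : S ↦ (hScl F F.2).preimage continuous_subtype_val) hcov
  obtain ⟨U, hUo, hU⟩ := isOpen_induced_iff.mp (isOpen_interior (s := ((↑) : K → M) ⁻¹' F))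
  have hyU : (y : M) ∈ U := by rw [← mem_preimage, hU]; exact hy
  obtain ⟨v, hvB, hyv, hvU⟩ := hB.exists_subset_of_mem_open hyU hUo
  refine ⟨F, hFS, v, hvB, ⟨y, y.2, hyv⟩, fun z ⟨hzK, hzv⟩ ↦ ?_⟩
  have hz : (⟨z, hzK⟩ : K) ∈ ((↑) : K → M) ⁻¹' U := hvU hzv
  rw [hU] at hz
  exact interior_subset (s := ((↑) : K → M) ⁻¹' F) hz

def trappedFibers {M X : Type*} (π : M → X) (F v : Set M) : Set X :=
  {x | (π ⁻¹' {x} ∩ v).Nonempty ∧ π ⁻¹' {x} ∩ v ⊆ F}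

section Factor

variable {G M X : Type*} [Group G]
  [TopologicalSpace M] [CompactSpace M] [MulAction G M] [ContinuousConstSMul G M]
  [MulAction.IsMinimal G M]
  [TopologicalSpace X] [CompactSpace X] [T2Space X] [MulAction G X] [ContinuousConstSMul G X]
  {π : M → X}

lemma nonempty_interior_image_of_isMinimal (hπc : Continuous π)
    (hπe : ∀ (g : G) (m : M), π (g • m) = g • π m) (hπs : Function.Surjective π)
    {K : Set M} (hK : IsClosed K) (hKi : (interior K).Nonempty) :
    (interior (π '' K)).Nonempty := by
  have : Nonempty X := ⟨π hKi.some⟩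
  obtain ⟨I, hI⟩ := isCompact_univ.exists_finite_cover_smul G isOpen_interior hKi
  have hπK : IsClosed (π '' K) := (hK.isCompact.image hπc).isClosed
  have hcov : ⋃ g : I, (g : G) • π '' K = univ := by
    refine eq_univ_of_forall fun x ↦ ?_
    obtain ⟨y, rfl⟩ := hπs x
    obtain ⟨g, hgI, z, hz, rfl⟩ := mem_iUnion₂.mp (hI (mem_univ y))
    exact mem_iUnion.mpr ⟨⟨g, hgI⟩, π z, mem_image_of_mem π (interior_subset hz), (hπe g z).symm⟩
  obtain ⟨g, hg⟩ := nonempty_interior_of_iUnion_of_closed (fun g : I ↦ hπK.smul (g : G)) hcov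
  rw [interior_smul] at hg
  exact smul_set_nonempty.mp hg

lemma isNowhereDense_trappedFibers [T2Space M] (hπc : Continuous π)
    (hπe : ∀ (g : G) (m : M), π (g • m) = g • π m) (hπs : Function.Surjective π)
    {F v : Set M} (hF : IsClosed F) (hFi : interior F = ∅) (hv : IsOpen v) :
    IsNowhereDense (trappedFibers π F v) := by
  refine isNowhereDense_of_forall_exists_isOpen_disjoint fun W hW ⟨x, hxW, hxB⟩ ↦ ?_
  obtain ⟨⟨y, hyx, hyv⟩, -⟩ := hxB
  set P := (π ⁻¹' W ∩ v) \ F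
  have hPo : IsOpen P := ((hW.preimage hπc).inter hv).sdiff hF
  have hPne : P.Nonempty := by
    by_contra hP
    have hsub : π ⁻¹' W ∩ v ⊆ interior F :=
      interior_maximal (sdiff_eq_empty.mp (not_nonempty_iff_eq_empty.mp hP))
        ((hW.preimage hπc).inter hv)
    rw [hFi] at hsub
    exact hsub ⟨show π y ∈ W from hyx ▸ hxW, hyv⟩
  obtain ⟨y₁, hy₁⟩ := hPne
  obtain ⟨K, hKn, hKc, hKP⟩ := exists_mem_nhds_isClosed_subset (hPo.mem_nhds hy₁)
  have hKW : π '' K ⊆ W := image_subset_iff.mpr fun z hz ↦ (hKP hz).1.1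
  refine ⟨interior (π '' K), interior_subset.trans hKW, isOpen_interior,
    nonempty_interior_image_of_isMinimal hπc hπe hπs hKc ⟨y₁, mem_interior_iff_mem_nhds.mpr hKn⟩,
    disjoint_left.mpr ?_⟩
  rintro _ hz ⟨-, hsub⟩
  obtain ⟨z, hzK, rfl⟩ := interior_subset hz
  exact (hKP hzK).2 (hsub ⟨rfl, (hKP hzK).1.2⟩)

theorem orbit_map_mem_residual [T2Space M] [SecondCountableTopology M] (hπc : Continuous π)
    (hπe : ∀ (g : G) (m : M), π (g • m) = g • π m) (hπs : Function.Surjective π)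
    {m : M} (hm : MulAction.orbit G m ∈ residual M) :
    MulAction.orbit G (π m) ∈ residual X := by
  obtain ⟨S, hSo, hSd, hSc, hSm⟩ := mem_residual_iff.mp hm
  suffices hmeagre : IsMeagre (MulAction.orbit G (π m))ᶜ by
    rwa [IsMeagre, compl_compl] at hmeagre
  have htrapped : ∀ F ∈ compl '' S, ∀ v ∈ countableBasis M, IsMeagre (trappedFibers π F v) := by
    rintro _ ⟨t, ht, rfl⟩ v hv
    have hti : interior tᶜ = ∅ :=
      interior_eq_empty_iff_dense_compl.mpr ((compl_compl t).symm ▸ hSd t ht)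
    exact (isNowhereDense_trappedFibers hπc hπe hπs (hSo t ht).isClosed_compl hti
      ((isBasis_countableBasis M).isOpen hv)).isMeagre
  refine (isMeagre_biUnion (hSc.image _) fun F hF ↦
    isMeagre_biUnion (countable_countableBasis M) (htrapped F hF)).mono fun x hx ↦ ?_
  have hfiber : π ⁻¹' {x} ⊆ ⋃₀ (compl '' S) := by
    rw [← compl_sInter]
    rintro y rfl hyS
    obtain ⟨g, rfl⟩ := hSm hyS
    exact hx ⟨g, (hπe g m).symm⟩
  obtain ⟨y, rfl⟩ := hπs x
  obtain ⟨F, hF, v, hv, hxFv⟩ := (isClosed_singleton.preimage hπc).isCompact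
    |>.exists_inter_subset_of_subset_sUnion ⟨y, rfl⟩ (hSc.image _)
      (fun _ ⟨t, ht, hFt⟩ ↦ hFt ▸ (hSo t ht).isClosed_compl) hfiber (isBasis_countableBasis M)
  exact mem_biUnion hF (mem_biUnion hv hxFv)

end Factor

universe u v

theorem comeager_orbit_of_univ_minimal_comeager_general
    {G : Type v} [Group G] [TopologicalSpace G]
    (M : Type u) [TopologicalSpace M] [CompactSpace M]
    [MulAction G M] [ContinuousSMul G M]
    (hminM : ∀ m : M, Dense (MulAction.orbit G m))
    (huniv : ∀ (Y : Type u) [TopologicalSpace Y] [CompactSpace Y] [T2Space Y]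
        [MulAction G Y] [ContinuousSMul G Y],
      (∀ y : Y, Dense (MulAction.orbit G y)) →
      ∃ π : M → Y, Continuous π ∧ (∀ (g : G) (m : M), π (g • m) = g • π m) ∧
        Function.Surjective π)
    [TopologicalSpace.MetrizableSpace M]
    (hco : ∃ m : M, MulAction.orbit G m ∈ residual M) :
    ∀ (X : Type u) [TopologicalSpace X] [CompactSpace X] [T2Space X]
        [MulAction G X] [ContinuousSMul G X],
      (∀ x : X, Dense (MulAction.orbit G x)) →
      ∃ x : X, MulAction.orbit G x ∈ residual X := by
  intro X _ _ _ _ _ hminX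
  have : MulAction.IsMinimal G M := ⟨hminM⟩
  obtain ⟨m, hm⟩ := hco
  obtain ⟨π, hπc, hπe, hπs⟩ := huniv X hminX
  exact ⟨π m, orbit_map_mem_residual hπc hπe hπs hm⟩

/-- If the universal minimal flow is metrizable with a comeager orbit, then
every minimal G-flow has a comeager orbit. -/
theorem comeager_orbit_of_univ_minimal_comeager
    {G : Type v} [Group G] [TopologicalSpace G] [IsTopologicalGroup G]
    [PolishSpace G]
    (M : Type u) [TopologicalSpace M] [CompactSpace M] [T2Space M]
    [MulAction G M] [ContinuousSMul G M]
    (hminM : ∀ m : M, Dense (MulAction.orbit G m))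
    (huniv : ∀ (Y : Type u) [TopologicalSpace Y] [CompactSpace Y] [T2Space Y]
        [MulAction G Y] [ContinuousSMul G Y],
      (∀ y : Y, Dense (MulAction.orbit G y)) →
      ∃ π : M → Y, Continuous π ∧ (∀ (g : G) (m : M), π (g • m) = g • π m) ∧
        Function.Surjective π)
    [TopologicalSpace.MetrizableSpace M]
    (hco : ∃ m : M, MulAction.orbit G m ∈ residual M) :
    ∀ (X : Type u) [TopologicalSpace X] [CompactSpace X] [T2Space X]
        [MulAction G X] [ContinuousSMul G X],
      (∀ x : X, Dense (MulAction.orbit G x)) →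
      ∃ x : X, MulAction.orbit G x ∈ residual X :=
  comeager_orbit_of_univ_minimal_comeager_general M hminM huniv hco
end

section
/- Let φ: Y → X be a highly proximal extension of minimal G-flows and B ⊆ Y open nonempty. The fiber image φ_fib(B) = {x ∈ X : φ⁻¹({x}) ⊆ B} is a nonempty open subset of X, and for any open identity neighborhood V, V·φ_fib(B) ⊆ φ_fib(VB). -/
open Pointwise

open Set

lemma smul_kernImage_subset {G α β : Type*} [Group G] [MulAction G α] [MulAction G β]
    {φ : α → β} (hφ : ∀ (g : G) (a : α), φ (g • a) = g • φ a) (V : Set G) (B : Set α) :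
    V • kernImage φ B ⊆ kernImage φ (V • B) := by
  rintro _ ⟨g, hg, x, hx, rfl⟩ y hy
  exact ⟨g, hg, g⁻¹ • y, hx (by rw [hφ, hy, inv_smul_smul]), smul_inv_smul g y⟩

theorem fiberImage_open_nonempty_general
    {G X Y : Type*} [Group G] [TopologicalSpace G]
    [TopologicalSpace X] [T2Space X]
    [MulAction G X]
    [TopologicalSpace Y] [CompactSpace Y]
    [MulAction G Y]
    (φ : Y → X) (hcont : Continuous φ)
    (hequiv : ∀ (g : G) (y : Y), φ (g • y) = g • φ y)
    (hhp : ∀ W : Set Y, IsOpen W → W.Nonempty → ∃ x : X, φ ⁻¹' {x} ⊆ W)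
    (B : Set Y) (hB : IsOpen B) (hBne : B.Nonempty) :
    IsOpen {x : X | φ ⁻¹' {x} ⊆ B} ∧ {x : X | φ ⁻¹' {x} ⊆ B}.Nonempty ∧
    ∀ V : Set G, IsOpen V → (1 : G) ∈ V →
      V • {x : X | φ ⁻¹' {x} ⊆ B} ⊆ {x : X | φ ⁻¹' {x} ⊆ V • B} :=
  -- `{x | φ ⁻¹' {x} ⊆ B}` unfolds to `kernImage φ B`, which is open because `φ` is a closed map
  ⟨isClosedMap_iff_kernImage.1 hcont.isClosedMap hB, hhp B hB hBne,
    fun V _ _ => smul_kernImage_subset hequiv V B⟩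

/-- Fiber images of nonempty open sets under a highly proximal extension are
nonempty open, and thickenings interact well with fiber images. -/
theorem fiberImage_open_nonempty
    {G X Y : Type*} [Group G] [TopologicalSpace G] [IsTopologicalGroup G]
    [TopologicalSpace X] [CompactSpace X] [T2Space X]
    [MulAction G X] [ContinuousSMul G X]
    [TopologicalSpace Y] [CompactSpace Y] [T2Space Y]
    [MulAction G Y] [ContinuousSMul G Y]
    (hminX : ∀ x : X, Dense (MulAction.orbit G x))
    (hminY : ∀ y : Y, Dense (MulAction.orbit G y))
    (φ : Y → X) (hcont : Continuous φ)
    (hequiv : ∀ (g : G) (y : Y), φ (g • y) = g • φ y)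
    (hsurj : Function.Surjective φ)
    (hhp : ∀ W : Set Y, IsOpen W → W.Nonempty → ∃ x : X, φ ⁻¹' {x} ⊆ W)
    (B : Set Y) (hB : IsOpen B) (hBne : B.Nonempty) :
    IsOpen {x : X | φ ⁻¹' {x} ⊆ B} ∧ {x : X | φ ⁻¹' {x} ⊆ B}.Nonempty ∧
    ∀ V : Set G, IsOpen V → (1 : G) ∈ V →
      V • {x : X | φ ⁻¹' {x} ⊆ B} ⊆ {x : X | φ ⁻¹' {x} ⊆ V • B} :=
  fiberImage_open_nonempty_general φ hcont hequiv hhp B hB hBne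
end
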